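/- arXiv:2509.01916 — 2 statements merged into one kernel-verified Lean document; each statement's English description precedes it below -/
import Mathlib

section
/- Let H ∈ ℝ^{p×d} be a matrix of rank p, Ĥ ∈ ℝ^{q×d} a matrix of rank q, and h, ĥ ∈ ℝ^d. Define the affine maps f : ℝ^p → ℝ^d by f(u) = uᵀH + h and g : ℝ^q → ℝ^d by g(v) = vᵀĤ + ĥ. Suppose there exist functions T : ℝ^p → ℝ^q and S : ℝ^q → ℝ^p such that f(u) = g(T(u)) for all u ∈ ℝ^p and g(v) = f(S(v)) for all v ∈ ℝ^q. Then p = q, and there exist an invertible matrix Λ ∈ ℝ^{p×p} and a vector b ∈ ℝ^p such that T(u) = Λu + b for all u ∈ ℝ^p. -/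
/-!
Since H and Ĥ have independent rows, u ↦ uᵀH and v ↦ vᵀĤ are injective and can be cancelled.
Cancelling Ĥ in f = g ∘ T shows that u ↦ T u - T 0 is linear; cancelling H and Ĥ in the two
factorizations shows that S is a two-sided inverse of T. Hence u ↦ T u - T 0 is a linear
isomorphism ℝ^p ≃ ℝ^q, which forces p = q and supplies Λ and its inverse.
-/

open Function

theorem Matrix.linearIndependent_row_of_rank_eq_card {m n K : Type*} [Fintype m] [Fintype n]
    [Field K] {A : Matrix m n K} (hA : A.rank = Fintype.card m) : LinearIndependent K A.row :=
  linearIndependent_iff_card_eq_finrank_span.mpr <| by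
    rw [Set.finrank, ← A.rank_eq_finrank_span_row, hA]

theorem Matrix.vecMul_injective_of_rank_eq_card {m n K : Type*} [Fintype m] [Fintype n]
    [Field K] {A : Matrix m n K} (hA : A.rank = Fintype.card m) : Injective A.vecMul :=
  Matrix.vecMul_injective_iff.mpr (Matrix.linearIndependent_row_of_rank_eq_card hA)

theorem exists_linearMap_eq_add_of_injective_comp {K U V W : Type*} [Ring K]
    [AddCommGroup U] [Module K U] [AddCommGroup V] [Module K V] [AddCommGroup W] [Module K W]
    (φ : V →ₗ[K] W) (hφ : Injective φ) (ψ : U →ₗ[K] W) (w : W) (T : U → V)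
    (hT : ∀ u, φ (T u) = ψ u + w) : ∃ L : U →ₗ[K] V, ∀ u, T u = L u + T 0 := by
  have hφT : ∀ u, φ (T u - T 0) = ψ u := fun u => by simp [map_sub, hT]
  refine ⟨{ toFun := fun u => T u - T 0, map_add' := ?_, map_smul' := ?_ }, fun u => ?_⟩
  · intro u v
    exact hφ (by simp only [map_add, hφT])
  · intro c u
    exact hφ (by simp only [map_smul, hφT, RingHom.id_apply])
  · exact (sub_add_cancel _ _).symm

theorem LinearEquiv.toMatrix'_mul_toMatrix'_symm {m n K : Type*} [Fintype m] [Fintype n]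
    [DecidableEq m] [DecidableEq n] [CommRing K] (e : (m → K) ≃ₗ[K] (n → K)) :
    LinearMap.toMatrix' (e : (m → K) →ₗ[K] n → K) *
      LinearMap.toMatrix' (e.symm : (n → K) →ₗ[K] m → K) = 1 := by
  rw [← LinearMap.toMatrix'_comp, LinearEquiv.comp_coe]
  simp

/-- If two injectively-parameterized affine maps f(u) = uᵀH + h (H of full row
rank p) and g(v) = vᵀĤ + ĥ (Ĥ of full row rank q) have the same image in the
sense that f factors through g via T and g factors through f via S, then p = q
and T is an invertible affine map. -/
theorem affine_reparameterization_of_mutual_factorization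
    (p q d : ℕ)
    (H : Matrix (Fin p) (Fin d) ℝ) (hH : H.rank = p)
    (Hhat : Matrix (Fin q) (Fin d) ℝ) (hHhat : Hhat.rank = q)
    (h hhat : Fin d → ℝ)
    (T : (Fin p → ℝ) → Fin q → ℝ) (S : (Fin q → ℝ) → Fin p → ℝ)
    (hT : ∀ u : Fin p → ℝ, Matrix.vecMul u H + h = Matrix.vecMul (T u) Hhat + hhat)
    (hS : ∀ v : Fin q → ℝ, Matrix.vecMul v Hhat + hhat = Matrix.vecMul (S v) H + h) :
    p = q ∧ ∃ (Λ : Matrix (Fin q) (Fin p) ℝ) (Λinv : Matrix (Fin p) (Fin q) ℝ)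
      (b : Fin q → ℝ), Λ * Λinv = 1 ∧ Λinv * Λ = 1 ∧
      ∀ u : Fin p → ℝ, T u = Λ.mulVec u + b := by
  have injH := H.vecMul_injective_of_rank_eq_card (by simpa using hH)
  have injHhat := Hhat.vecMul_injective_of_rank_eq_card (by simpa using hHhat)
  obtain ⟨L, hL⟩ := exists_linearMap_eq_add_of_injective_comp Hhat.vecMulLinear injHhat
    H.vecMulLinear (h - hhat) T fun u => by simp [← add_sub_assoc, hT u]
  have hST : LeftInverse S T := fun u =>
    injH (add_right_cancel ((hS (T u)).symm.trans (hT u).symm))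
  have hTS : RightInverse S T := fun v =>
    injHhat (add_right_cancel ((hT (S v)).symm.trans (hS v).symm))
  have hTbij : Bijective T := bijective_iff_has_inverse.mpr ⟨S, hST, hTS⟩
  have hLbij : Bijective L := by
    convert (Equiv.subRight (T 0)).bijective.comp hTbij using 1
    ext u
    simp [hL u]
  let e := LinearEquiv.ofBijective L hLbij
  refine ⟨by simpa using e.finrank_eq, LinearMap.toMatrix' (e : _ →ₗ[ℝ] _),
    LinearMap.toMatrix' (e.symm : _ →ₗ[ℝ] _), T 0, e.toMatrix'_mul_toMatrix'_symm, ?_, fun u => ?_⟩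
  · simpa using e.symm.toMatrix'_mul_toMatrix'_symm
  · rw [LinearMap.toMatrix'_mulVec]
    exact hL u
end

section
/- Let ℓ ≥ 1, let A be the (finite) set of multi-indices α ∈ ℕ^p with 1 ≤ |α| ≤ ℓ, let H ∈ ℝ^{A×d} be a matrix whose rows are linearly independent, and let h ∈ ℝ^d. Define the full-row-rank polynomial map f : ℝ^p → ℝ^d by f(u)_j = h_j + ∑_{α∈A} H_{αj} u^α. Then f admits a polynomial left inverse: there exist polynomials G₁,…,G_p in d real variables such that for every u ∈ ℝ^p and every k ∈ {1,…,p}, the evaluation of G_k at f(u) equals u_k. -/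
/-!
Only linear algebra is needed. Since the rows `H_α` are linearly independent, for each `k` there is
a linear functional `φ_k` on `ℝ^d` reading off the coefficient of `H_{e_k}` in any combination
`∑_α c_α H_α`. As `f u - h = ∑_α u^α H_α` and `u^{e_k} = u_k`, the affine polynomial
`G_k(y) = φ_k(y - h)` is a left inverse.
-/

/-- The set of multi-indices `α ∈ ℕ^p` with `1 ≤ |α| ≤ ℓ`, where `|α|` is the
total degree `∑ k, α k`. (Since `|α| ≤ ℓ` forces `α k ≤ ℓ` for every `k`, this
set is a subset of the finite box `Finset.Icc 0 (fun _ => ℓ)`.) -/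
noncomputable def degSet (p ℓ : ℕ) : Finset (Fin p → ℕ) :=
  (Finset.Icc 0 fun _ => ℓ).filter fun α => 1 ≤ ∑ k, α k ∧ ∑ k, α k ≤ ℓ

open MvPolynomial

theorem LinearIndepOn.exists_linearMap_sum_smul_eq {K V ι : Type*} [Field K] [AddCommGroup V]
    [Module K V] {v : ι → V} {s : Finset ι} (hv : LinearIndepOn K v s) {i : ι} (hi : i ∈ s) :
    ∃ φ : V →ₗ[K] K, ∀ c : ι → K, φ (∑ j ∈ s, c j • v j) = c i := by
  obtain ⟨L, hL⟩ := LinearMap.exists_leftInverse_of_injective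
    (Fintype.linearCombination K fun j : s => v j)
    (LinearMap.ker_eq_bot.2 (linearIndependent_iff_injective_fintypeLinearCombination.1 hv))
  refine ⟨LinearMap.proj ⟨i, hi⟩ ∘ₗ L, fun c => ?_⟩
  have hLc := congrArg (fun g => g (fun j : s => c j) ⟨i, hi⟩) hL
  rw [← s.sum_coe_sort]
  simpa [Fintype.linearCombination_apply] using hLc

theorem LinearMap.exists_mvPolynomial_eval_eq {σ R : Type*} [Fintype σ] [CommSemiring R]
    (φ : (σ → R) →ₗ[R] R) : ∃ G : MvPolynomial σ R, ∀ x, eval x G = φ x := by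
  classical
  refine ⟨∑ j, C (φ (Pi.single j 1)) * X j, fun x => ?_⟩
  rw [map_sum]
  conv_rhs => rw [← Finset.univ_sum_single x, map_sum]
  refine Finset.sum_congr rfl fun j _ => ?_
  rw [eval_mul, eval_C, eval_X, mul_comm, ← smul_eq_mul, ← map_smul, ← Pi.single_smul', smul_eq_mul,
    mul_one]

theorem single_mem_degSet {p ℓ : ℕ} (hℓ : 1 ≤ ℓ) (k : Fin p) : Pi.single k 1 ∈ degSet p ℓ := by
  simp only [degSet, Finset.mem_filter, Finset.mem_Icc, Pi.le_def, Finset.sum_pi_single',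
    Finset.mem_univ, if_true]
  refine ⟨⟨fun _ => Nat.zero_le _, fun m => ?_⟩, le_rfl, hℓ⟩
  rw [Pi.single_apply]
  split_ifs <;> omega

/-- A full-row-rank polynomial map `f : ℝ^p → ℝ^d`,
`f(u)_j = h_j + ∑_{α ∈ A} H_{αj} u^α` where `A` is the set of multi-indices of
total degree between 1 and ℓ and the rows of `H` are linearly independent,
admits a polynomial left inverse: there are polynomials `G₁, …, G_p` in `d`
variables with `G_k (f u) = u k` for all `u`. -/
theorem fullRowRank_polynomial_map_exists_polynomial_left_inverse
    (p d ℓ : ℕ) (hℓ : 1 ≤ ℓ)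
    (H : (Fin p → ℕ) → Fin d → ℝ) (h : Fin d → ℝ)
    (hH : ∀ c : (Fin p → ℕ) → ℝ,
      (∀ j : Fin d, ∑ α ∈ degSet p ℓ, c α * H α j = 0) →
      ∀ α ∈ degSet p ℓ, c α = 0)
    (f : (Fin p → ℝ) → Fin d → ℝ)
    (hf : ∀ (u : Fin p → ℝ) (j : Fin d),
      f u j = h j + ∑ α ∈ degSet p ℓ, H α j * ∏ k, u k ^ α k) :
    ∃ G : Fin p → MvPolynomial (Fin d) ℝ,
      ∀ (u : Fin p → ℝ) (k : Fin p), MvPolynomial.eval (f u) (G k) = u k := by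
  have hli : LinearIndepOn ℝ H (degSet p ℓ : Set (Fin p → ℕ)) :=
    linearIndepOn_finset_iff.2 fun c hc => hH c fun j => by simpa using congrFun hc j
  have hf_sub : ∀ u, f u - h = ∑ α ∈ degSet p ℓ, (∏ k, u k ^ α k) • H α := fun u => by
    funext j
    simp [hf, mul_comm]
  have hcoord : ∀ k : Fin p, ∃ φ : (Fin d → ℝ) →ₗ[ℝ] ℝ, ∀ u, φ (f u - h) = u k := fun k => by
    obtain ⟨φ, hφ⟩ := hli.exists_linearMap_sum_smul_eq (single_mem_degSet hℓ k)
    exact ⟨φ, fun u => by simp [hf_sub, hφ, Pi.single_apply]⟩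
  choose φ hφ using hcoord
  choose G hG using fun k => (φ k).exists_mvPolynomial_eval_eq
  refine ⟨fun k => G k - C (φ k h), fun u k => ?_⟩
  rw [eval_sub, eval_C, hG, ← map_sub, hφ]
end
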